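/- Let b > 0, β = 2, κ > 0, and f(x) = ((d+κ)/2) log(1+|x|²). Define g_in(r) = r b^{1/2} exp( b r² − (10/3) b^{3/2} r³ + (15/4) b² r⁴ − (6/5) b^{5/2} r⁵ + 47/60 ) for r ∈ [0, b^{-1/2}), and g(r) = g_in(r) for r < b^{-1/2}, g(r) = exp(b r²) for r ≥ b^{-1/2}. Then g satisfies Assumption G1: g_in maps [0, b^{-1/2}) onto [0, e), is strictly increasing and twice continuously differentiable, g_in(0) = 0, and as r → b^{-1/2} from the left: g_in(r) → e, g_in'(r) → 2 b^{1/2} e, g_in''(r) → 6 b e, g_in'''(r) → 20 b^{3/2} e; moreover |f'(g_in(r)) g_in'(r)/r|, |(d/dr) log g_in'(r)/r|, |(d/dr) log(g_in(r)/r)/r|, |(d²/dr²) log(g_in(r)/r)| and |(d²/dr²) log g_in'(r)| remain bounded as r → 0⁺. -/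

import Mathlib

/-!
With `a = √b` the exponent is a polynomial in `a r`: `g_in(r) = h(a r)` for the profile
`h(u) = u e^{P(u)}`, `P(u) = u² − 10/3 u³ + 15/4 u⁴ − 6/5 u⁵ + 47/60`, so
`g_in⁽ᵏ⁾(r) = aᵏ h⁽ᵏ⁾(a r)`. Since `P(1) = P'(1) = 1`, the values `h⁽ᵏ⁾(1)` are
`e, 2e, 6e, 20e`, which are the boundary limits at `r = a⁻¹`; and
`h'(u) = e^{P(u)} (1 + u P'(u))` is positive on `[0, 1]`, which gives monotonicity.
Near `0`, `log (g_in(r)/r) = log a + P(a r)` and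
`log g_in'(r) = log a + P(a r) + log (1 + a r P'(a r))` are smooth up to `r = 0` with
vanishing derivative there (as `P'(0) = 0`), so their first derivatives divided by `r` and
their second derivatives stay bounded.
-/

open Filter MeasureTheory Set
open scoped RealInnerProductSpace Topology

noncomputable section

/-- The explicit initial function `g_in` of equation (24) of the paper (case `β = 2`):
`g_in(r) = r b^{1/2} exp(b r² − (10/3) b^{3/2} r³ + (15/4) b² r⁴ − (6/5) b^{5/2} r⁵ + 47/60)`. -/
def ginExplicit (b : ℝ) (r : ℝ) : ℝ :=
  r * b ^ ((1:ℝ)/2) *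
    Real.exp (b * r^2 - 10/3 * b ^ ((3:ℝ)/2) * r^3 + 15/4 * b^2 * r^4
      - 6/5 * b ^ ((5:ℝ)/2) * r^5 + 47/60)

open Real

lemma HasDerivAt.comp_const_mul {F : ℝ → ℝ} {F' a r : ℝ} (hF : HasDerivAt F F' (a * r)) :
    HasDerivAt (fun r => F (a * r)) (a * F') r := by
  simpa [mul_comm, Function.comp_def] using hF.comp r ((hasDerivAt_id' r).const_mul a)

lemma HasDerivAt.tendsto_div_nhdsGT_zero {F : ℝ → ℝ} {F' : ℝ} (hF : HasDerivAt F F' 0)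
    (h0 : F 0 = 0) : Tendsto (fun r => F r / r) (𝓝[>] 0) (𝓝 F') := by
  simpa [h0, div_eq_inv_mul] using hF.tendsto_slope_zero_right

lemma Continuous.tendsto_comp_mul_nhdsLT_inv {F : ℝ → ℝ} (hF : Continuous F) {a : ℝ}
    (ha : a ≠ 0) : Tendsto (fun r => F (a * r)) (𝓝[<] a⁻¹) (𝓝 (F 1)) :=
  ((hF.comp (continuous_const_mul a)).tendsto' _ _ (by simp [ha])).mono_left nhdsWithin_le_nhds

lemma bounded_deriv_div_and_deriv_deriv_of_eqOn {φ ψ ψ' ψ'' : ℝ → ℝ} {U : Set ℝ}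
    (hU : IsOpen U) (hU0 : U ∈ 𝓝[>] 0) (hφ : EqOn φ ψ U)
    (hψ : ∀ s ∈ U, HasDerivAt ψ (ψ' s) s) (hψ' : ∀ s ∈ insert 0 U, HasDerivAt ψ' (ψ'' s) s)
    (hψ'' : ContinuousAt ψ'' 0) (hψ'0 : ψ' 0 = 0) :
    (∃ C : ℝ, ∀ᶠ r in 𝓝[>] 0, |deriv φ r / r| ≤ C) ∧
      ∃ C : ℝ, ∀ᶠ r in 𝓝[>] 0, |deriv (deriv φ) r| ≤ C := by
  have hd : EqOn (deriv φ) ψ' U := fun s hs =>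
    ((hφ.eventuallyEq_of_mem (hU.mem_nhds hs)).deriv_eq).trans (hψ s hs).deriv
  have hdd : EqOn (deriv (deriv φ)) ψ'' U := fun s hs =>
    ((hd.eventuallyEq_of_mem (hU.mem_nhds hs)).deriv_eq).trans
      (hψ' s (mem_insert_of_mem _ hs)).deriv
  constructor
  · have h : Tendsto (fun r => deriv φ r / r) (𝓝[>] 0) (𝓝 (ψ'' 0)) :=
      (HasDerivAt.tendsto_div_nhdsGT_zero (hψ' 0 (mem_insert _ _)) hψ'0).congr'
        (eventually_of_mem hU0 fun r hr => by simp only [hd hr])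
    exact h.abs.isBoundedUnder_le
  · have h : Tendsto (deriv (deriv φ)) (𝓝[>] 0) (𝓝 (ψ'' 0)) :=
      (hψ''.tendsto.mono_left nhdsWithin_le_nhds).congr'
        (eventually_of_mem hU0 fun r hr => (hdd hr).symm)
    exact h.abs.isBoundedUnder_le

namespace GinExplicit

def P (u : ℝ) : ℝ := u^2 - 10/3*u^3 + 15/4*u^4 - 6/5*u^5 + 47/60
def P' (u : ℝ) : ℝ := 2*u - 10*u^2 + 15*u^3 - 6*u^4
def P'' (u : ℝ) : ℝ := 2 - 20*u + 45*u^2 - 24*u^3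

def Q (u : ℝ) : ℝ := 1 + u * P' u
def Q' (u : ℝ) : ℝ := 4*u - 30*u^2 + 60*u^3 - 30*u^4
def Q'' (u : ℝ) : ℝ := 4 - 60*u + 180*u^2 - 120*u^3

lemma hasDerivAt_P (u : ℝ) : HasDerivAt P (P' u) u := by
  refine ((((hasDerivAt_pow 2 u).sub ((hasDerivAt_pow 3 u).const_mul (10/3))).add
    ((hasDerivAt_pow 4 u).const_mul (15/4))).sub
      ((hasDerivAt_pow 5 u).const_mul (6/5))).add_const (47/60 : ℝ) |>.congr_deriv ?_
  norm_num [P']; ring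

lemma hasDerivAt_P' (u : ℝ) : HasDerivAt P' (P'' u) u := by
  refine ((((hasDerivAt_id' u).const_mul 2).sub ((hasDerivAt_pow 2 u).const_mul 10)).add
    ((hasDerivAt_pow 3 u).const_mul 15)).sub ((hasDerivAt_pow 4 u).const_mul 6) |>.congr_deriv ?_
  norm_num [P'']; ring

lemma hasDerivAt_Q (u : ℝ) : HasDerivAt Q (Q' u) u := by
  refine ((hasDerivAt_id' u).mul (hasDerivAt_P' u)).const_add 1 |>.congr_deriv ?_
  simp only [Q', P', P'']; ring

lemma hasDerivAt_Q' (u : ℝ) : HasDerivAt Q' (Q'' u) u := by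
  refine ((((hasDerivAt_id' u).const_mul 4).sub ((hasDerivAt_pow 2 u).const_mul 30)).add
    ((hasDerivAt_pow 3 u).const_mul 60)).sub ((hasDerivAt_pow 4 u).const_mul 30) |>.congr_deriv ?_
  norm_num [Q'']; ring

lemma Q_pos {u : ℝ} (h0 : 0 ≤ u) (h1 : u ≤ 1) : 0 < Q u := by
  simp only [Q, P']
  nlinarith [sq_nonneg (3*u^2 - 5/3*u), mul_nonneg (pow_nonneg h0 4) (sub_nonneg.2 h1), sq_nonneg u]

def profile (u : ℝ) : ℝ := u * exp (P u)
def profile' (u : ℝ) : ℝ := exp (P u) * Q u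
def profile'' (u : ℝ) : ℝ := exp (P u) * (P' u * Q u + Q' u)
def profile''' (u : ℝ) : ℝ :=
  exp (P u) * (P' u * (P' u * Q u + Q' u) + (P'' u * Q u + P' u * Q' u + Q'' u))

lemma hasDerivAt_exp_P_mul {q : ℝ → ℝ} {q' u : ℝ} (hq : HasDerivAt q q' u) :
    HasDerivAt (fun u => exp (P u) * q u) (exp (P u) * (P' u * q u + q')) u := by
  refine (hasDerivAt_P u).exp.mul hq |>.congr_deriv ?_
  ring

lemma hasDerivAt_profile (u : ℝ) : HasDerivAt profile (profile' u) u := by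
  refine (hasDerivAt_id' u).mul (hasDerivAt_P u).exp |>.congr_deriv ?_
  simp only [profile', Q]; ring

lemma hasDerivAt_profile' (u : ℝ) : HasDerivAt profile' (profile'' u) u :=
  hasDerivAt_exp_P_mul (hasDerivAt_Q u)

lemma hasDerivAt_profile'' (u : ℝ) : HasDerivAt profile'' (profile''' u) u :=
  hasDerivAt_exp_P_mul (((hasDerivAt_P' u).mul (hasDerivAt_Q u)).add (hasDerivAt_Q' u))

lemma continuous_profile : Continuous profile := by unfold profile P; fun_prop
lemma continuous_profile' : Continuous profile' := by unfold profile' P Q P'; fun_prop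
lemma continuous_profile'' : Continuous profile'' := by unfold profile'' P Q P' Q'; fun_prop
lemma continuous_profile''' : Continuous profile''' := by
  unfold profile''' P Q P' P'' Q' Q''; fun_prop

lemma profile'_pos {u : ℝ} (h0 : 0 ≤ u) (h1 : u ≤ 1) : 0 < profile' u :=
  mul_pos (exp_pos _) (Q_pos h0 h1)

lemma profile_one : profile 1 = exp 1 := by norm_num [profile, P]
lemma profile'_one : profile' 1 = 2 * exp 1 := by norm_num [profile', P, Q, P']; ring
lemma profile''_one : profile'' 1 = 6 * exp 1 := by norm_num [profile'', P, Q, P', Q']; ring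
lemma profile'''_one : profile''' 1 = 20 * exp 1 := by
  norm_num [profile''', P, Q, P', P'', Q', Q'']; ring

end GinExplicit

open GinExplicit

lemma continuous_ginExplicit (b : ℝ) : Continuous (ginExplicit b) := by
  unfold ginExplicit; fun_prop

lemma contDiff_ginExplicit (b : ℝ) : ContDiff ℝ 2 (ginExplicit b) := by
  unfold ginExplicit; fun_prop

section

variable {b : ℝ}

lemma ginExplicit_eq_profile (hb : 0 ≤ b) : ginExplicit b = fun r => profile (√b * r) := by
  obtain ⟨a, ha, rfl⟩ : ∃ a, 0 ≤ a ∧ b = a ^ 2 := ⟨√b, sqrt_nonneg b, (sq_sqrt hb).symm⟩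
  have hpow (n : ℕ) : (a ^ 2) ^ ((n : ℝ) / 2) = a ^ n := by
    rw [rpow_div_two_eq_sqrt _ (by positivity), sqrt_sq ha, rpow_natCast]
  have h1 := hpow 1
  have h3 := hpow 3
  have h5 := hpow 5
  push_cast at h1 h3 h5
  funext r
  simp only [ginExplicit, profile, P, sqrt_sq ha, h1, h3, h5]
  ring_nf

lemma ginExplicit_zero : ginExplicit b 0 = 0 := by simp [ginExplicit]

lemma ginExplicit_inv_sqrt (hb : 0 < b) : ginExplicit b (√b)⁻¹ = exp 1 := by
  simp [ginExplicit_eq_profile hb.le, (sqrt_pos.2 hb).ne', profile_one]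

lemma deriv_ginExplicit (hb : 0 ≤ b) :
    deriv (ginExplicit b) = fun r => √b * profile' (√b * r) := by
  rw [ginExplicit_eq_profile hb]
  funext r
  exact (hasDerivAt_profile _).comp_const_mul.deriv

lemma deriv_deriv_ginExplicit (hb : 0 ≤ b) :
    deriv (deriv (ginExplicit b)) = fun r => √b * (√b * profile'' (√b * r)) := by
  rw [deriv_ginExplicit hb]
  funext r
  exact ((hasDerivAt_profile' _).comp_const_mul.const_mul _).deriv

lemma deriv_deriv_deriv_ginExplicit (hb : 0 ≤ b) :
    deriv (deriv (deriv (ginExplicit b))) =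
      fun r => √b * (√b * (√b * profile''' (√b * r))) := by
  rw [deriv_deriv_ginExplicit hb]
  funext r
  exact (((hasDerivAt_profile'' _).comp_const_mul.const_mul _).const_mul _).deriv

lemma strictMonoOn_ginExplicit (hb : 0 < b) :
    StrictMonoOn (ginExplicit b) (Icc 0 (√b)⁻¹) := by
  have ha := sqrt_pos.2 hb
  refine strictMonoOn_of_deriv_pos (convex_Icc _ _) (continuous_ginExplicit b).continuousOn ?_
  intro r hr
  rw [interior_Icc] at hr
  have hu : √b * r < 1 := by simpa [ha.ne'] using mul_lt_mul_of_pos_left hr.2 ha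
  rw [deriv_ginExplicit hb.le]
  exact mul_pos ha (profile'_pos (mul_pos ha hr.1).le hu.le)

lemma tendsto_ginExplicit (hb : 0 < b) :
    Tendsto (ginExplicit b) (𝓝[<] (√b)⁻¹) (𝓝 (exp 1)) := by
  rw [ginExplicit_eq_profile hb.le, ← profile_one]
  exact continuous_profile.tendsto_comp_mul_nhdsLT_inv (sqrt_pos.2 hb).ne'

lemma tendsto_deriv_ginExplicit (hb : 0 < b) :
    Tendsto (deriv (ginExplicit b)) (𝓝[<] (√b)⁻¹) (𝓝 (2 * √b * exp 1)) := by
  have h := (continuous_profile'.tendsto_comp_mul_nhdsLT_inv (sqrt_pos.2 hb).ne').const_mul √b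
  rw [profile'_one] at h
  rw [deriv_ginExplicit hb.le]
  convert h using 2
  ring

lemma tendsto_deriv_deriv_ginExplicit (hb : 0 < b) :
    Tendsto (deriv (deriv (ginExplicit b))) (𝓝[<] (√b)⁻¹) (𝓝 (6 * b * exp 1)) := by
  have h := ((continuous_profile''.tendsto_comp_mul_nhdsLT_inv (sqrt_pos.2 hb).ne').const_mul
    √b).const_mul √b
  rw [profile''_one, ← mul_assoc, mul_self_sqrt hb.le] at h
  rw [deriv_deriv_ginExplicit hb.le]
  convert h using 2
  ring

lemma tendsto_deriv_deriv_deriv_ginExplicit (hb : 0 < b) :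
    Tendsto (deriv (deriv (deriv (ginExplicit b)))) (𝓝[<] (√b)⁻¹)
      (𝓝 (20 * √b ^ 3 * exp 1)) := by
  have h := (((continuous_profile'''.tendsto_comp_mul_nhdsLT_inv (sqrt_pos.2 hb).ne').const_mul
    √b).const_mul √b).const_mul √b
  rw [profile'''_one] at h
  rw [deriv_deriv_deriv_ginExplicit hb.le]
  convert h using 2
  ring

lemma deriv_const_mul_log_one_add_sq (c : ℝ) :
    deriv (fun s => c * log (1 + s ^ 2)) = fun s => c * (2 * s / (1 + s ^ 2)) := by
  funext s
  have h := (((hasDerivAt_pow 2 s).const_add 1).log (by positivity)).const_mul c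
  rw [h.deriv]
  ring

lemma bounded_potential_term (hb : 0 ≤ b) (c : ℝ) :
    ∃ C : ℝ, ∀ᶠ r in 𝓝[>] 0,
      |deriv (fun s => c * log (1 + s ^ 2)) (ginExplicit b r) * deriv (ginExplicit b) r / r|
        ≤ C := by
  set F := fun r => deriv (fun s => c * log (1 + s ^ 2)) (ginExplicit b r) * deriv (ginExplicit b) r
  have hF : DifferentiableAt ℝ F 0 := by
    simp only [F, deriv_const_mul_log_one_add_sq, deriv_ginExplicit hb]
    unfold ginExplicit profile' P Q P'
    fun_prop (disch := positivity)
  have hF0 : F 0 = 0 := by simp [F, ginExplicit_zero]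
  exact (HasDerivAt.tendsto_div_nhdsGT_zero hF.hasDerivAt hF0).abs.isBoundedUnder_le

lemma bounded_log_ginExplicit_div (hb : 0 < b) :
    (∃ C : ℝ, ∀ᶠ r in 𝓝[>] 0, |deriv (fun s => log (ginExplicit b s / s)) r / r| ≤ C) ∧
      ∃ C : ℝ, ∀ᶠ r in 𝓝[>] 0,
        |deriv (deriv (fun s => log (ginExplicit b s / s))) r| ≤ C := by
  have ha := sqrt_pos.2 hb
  refine bounded_deriv_div_and_deriv_deriv_of_eqOn (ψ := fun s => log √b + P (√b * s))
    (ψ' := fun s => √b * P' (√b * s)) (ψ'' := fun s => √b * (√b * P'' (√b * s)))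
    isOpen_Ioi self_mem_nhdsWithin ?_ (fun s _ => (hasDerivAt_P _).comp_const_mul.const_add _)
    (fun s _ => (hasDerivAt_P' _).comp_const_mul.const_mul _) (by unfold P''; fun_prop)
    (by simp [P'])
  intro s hs
  have hs : s ≠ 0 := ne_of_gt hs
  simp only [ginExplicit_eq_profile hb.le, profile]
  rw [mul_right_comm, mul_div_cancel_right₀ _ hs, log_mul ha.ne' (exp_pos _).ne', log_exp]

lemma bounded_log_deriv_ginExplicit (hb : 0 < b) :
    (∃ C : ℝ, ∀ᶠ r in 𝓝[>] 0, |deriv (fun s => log (deriv (ginExplicit b) s)) r / r| ≤ C) ∧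
      ∃ C : ℝ, ∀ᶠ r in 𝓝[>] 0,
        |deriv (deriv (fun s => log (deriv (ginExplicit b) s))) r| ≤ C := by
  have ha := sqrt_pos.2 hb
  set U := {s | 0 < Q (√b * s)}
  have hU : IsOpen U := isOpen_lt continuous_const (by unfold Q P'; fun_prop)
  have hQ : ∀ s ∈ insert 0 U, Q (√b * s) ≠ 0 := by
    rintro s (rfl | hs)
    · simp [Q]
    · exact hs.ne'
  refine bounded_deriv_div_and_deriv_deriv_of_eqOn
    (ψ := fun s => log √b + (P (√b * s) + log (Q (√b * s))))
    (ψ' := fun s => √b * (P' (√b * s) + Q' (√b * s) / Q (√b * s)))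
    (ψ'' := fun s => √b * (√b * (P'' (√b * s) +
      (Q'' (√b * s) * Q (√b * s) - Q' (√b * s) * Q' (√b * s)) / Q (√b * s) ^ 2)))
    hU (mem_nhdsWithin_of_mem_nhds (hU.mem_nhds (by simp [U, Q]))) ?_
    (fun s hs =>
      (((hasDerivAt_P _).add ((hasDerivAt_Q _).log hs.ne')).comp_const_mul).const_add _)
    (fun s hs => (((hasDerivAt_P' _).add
      ((hasDerivAt_Q' _).div (hasDerivAt_Q _) (hQ s hs))).comp_const_mul).const_mul _)
    ?_ (by simp [P', Q'])
  · intro s hs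
    simp only [deriv_ginExplicit hb.le, profile']
    rw [log_mul ha.ne' (mul_pos (exp_pos _) hs).ne', log_mul (exp_pos _).ne' hs.ne', log_exp]
  · unfold P'' Q' Q'' Q P'
    fun_prop (disch := norm_num)

end

theorem ginExplicit_satisfies_G1_general
    (d : ℕ) (b κ : ℝ) (hb : 0 < b) :
    MapsTo (ginExplicit b) (Ico (0:ℝ) (b ^ (-1/(2:ℝ)))) (Ico (0:ℝ) (Real.exp 1)) ∧
    SurjOn (ginExplicit b) (Ico (0:ℝ) (b ^ (-1/(2:ℝ)))) (Ico (0:ℝ) (Real.exp 1)) ∧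
    StrictMonoOn (ginExplicit b) (Ico (0:ℝ) (b ^ (-1/(2:ℝ)))) ∧
    ContDiffOn ℝ 2 (ginExplicit b) (Ico (0:ℝ) (b ^ (-1/(2:ℝ)))) ∧
    ginExplicit b 0 = 0 ∧
    Tendsto (ginExplicit b)
      (nhdsWithin (b ^ (-1/(2:ℝ))) (Iio (b ^ (-1/(2:ℝ))))) (nhds (Real.exp 1)) ∧
    Tendsto (deriv (ginExplicit b))
      (nhdsWithin (b ^ (-1/(2:ℝ))) (Iio (b ^ (-1/(2:ℝ)))))
      (nhds (2 * b ^ ((1:ℝ)/2) * Real.exp 1)) ∧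
    Tendsto (deriv (deriv (ginExplicit b)))
      (nhdsWithin (b ^ (-1/(2:ℝ))) (Iio (b ^ (-1/(2:ℝ)))))
      (nhds (6 * b * Real.exp 1)) ∧
    Tendsto (deriv (deriv (deriv (ginExplicit b))))
      (nhdsWithin (b ^ (-1/(2:ℝ))) (Iio (b ^ (-1/(2:ℝ)))))
      (nhds (20 * b ^ ((3:ℝ)/2) * Real.exp 1)) ∧
    (∃ C : ℝ, ∀ᶠ r in nhdsWithin 0 (Ioi (0:ℝ)),
      |deriv (fun s => ((d:ℝ) + κ)/2 * Real.log (1 + s^2)) (ginExplicit b r)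
        * deriv (ginExplicit b) r / r| ≤ C) ∧
    (∃ C : ℝ, ∀ᶠ r in nhdsWithin 0 (Ioi (0:ℝ)),
      |deriv (fun s => Real.log (deriv (ginExplicit b) s)) r / r| ≤ C) ∧
    (∃ C : ℝ, ∀ᶠ r in nhdsWithin 0 (Ioi (0:ℝ)),
      |deriv (fun s => Real.log (ginExplicit b s / s)) r / r| ≤ C) ∧
    (∃ C : ℝ, ∀ᶠ r in nhdsWithin 0 (Ioi (0:ℝ)),
      |deriv (deriv (fun s => Real.log (ginExplicit b s / s))) r| ≤ C) ∧
    (∃ C : ℝ, ∀ᶠ r in nhdsWithin 0 (Ioi (0:ℝ)),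
      |deriv (deriv (fun s => Real.log (deriv (ginExplicit b) s))) r| ≤ C) := by
  have h1 : b ^ ((1:ℝ)/2) = √b := (sqrt_eq_rpow b).symm
  have h3 : b ^ ((3:ℝ)/2) = √b ^ 3 := by rw [rpow_div_two_eq_sqrt _ hb.le]; norm_cast
  have hr0 : b ^ (-1/(2:ℝ)) = (√b)⁻¹ := by rw [neg_div, rpow_neg hb.le, ← sqrt_eq_rpow]
  rw [h1, h3, hr0]
  have hmono := strictMonoOn_ginExplicit hb
  obtain ⟨hlogDiv, hlogDiv'⟩ := bounded_log_ginExplicit_div hb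
  obtain ⟨hlogDeriv, hlogDeriv'⟩ := bounded_log_deriv_ginExplicit hb
  refine ⟨?_, ?_, hmono.mono Ico_subset_Icc_self, (contDiff_ginExplicit b).contDiffOn,
    ginExplicit_zero, tendsto_ginExplicit hb, tendsto_deriv_ginExplicit hb,
    tendsto_deriv_deriv_ginExplicit hb, tendsto_deriv_deriv_deriv_ginExplicit hb,
    bounded_potential_term hb.le _, hlogDeriv, hlogDiv, hlogDiv', hlogDeriv'⟩
  · simpa [ginExplicit_zero, ginExplicit_inv_sqrt hb] using hmono.mapsTo_Ico
  · have h := intermediate_value_Ico (by positivity : (0:ℝ) ≤ (√b)⁻¹)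
      (continuous_ginExplicit b).continuousOn
    rwa [ginExplicit_zero, ginExplicit_inv_sqrt hb] at h

/-- Lemma 5.5 of the paper: with `β = 2`,
`f(x) = ((d+κ)/2) log(1+|x|²)` and the explicit `g_in` above, Assumption G1 holds:
`g_in` maps `[0, b^{-1/2})` onto `[0, e)`, is strictly increasing and twice continuously
differentiable, `g_in 0 = 0`, the boundary limits at `b^{-1/2}` are
`e, 2b^{1/2}e, 6be, 20b^{3/2}e`, and the stated quantities remain bounded as `r → 0⁺`. -/
theorem ginExplicit_satisfies_G1
    (d : ℕ) (b κ : ℝ) (hb : 0 < b) (hκ : 0 < κ) :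
    MapsTo (ginExplicit b) (Ico (0:ℝ) (b ^ (-1/(2:ℝ)))) (Ico (0:ℝ) (Real.exp 1)) ∧
    SurjOn (ginExplicit b) (Ico (0:ℝ) (b ^ (-1/(2:ℝ)))) (Ico (0:ℝ) (Real.exp 1)) ∧
    StrictMonoOn (ginExplicit b) (Ico (0:ℝ) (b ^ (-1/(2:ℝ)))) ∧
    ContDiffOn ℝ 2 (ginExplicit b) (Ico (0:ℝ) (b ^ (-1/(2:ℝ)))) ∧
    ginExplicit b 0 = 0 ∧
    Tendsto (ginExplicit b)
      (nhdsWithin (b ^ (-1/(2:ℝ))) (Iio (b ^ (-1/(2:ℝ))))) (nhds (Real.exp 1)) ∧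
    Tendsto (deriv (ginExplicit b))
      (nhdsWithin (b ^ (-1/(2:ℝ))) (Iio (b ^ (-1/(2:ℝ)))))
      (nhds (2 * b ^ ((1:ℝ)/2) * Real.exp 1)) ∧
    Tendsto (deriv (deriv (ginExplicit b)))
      (nhdsWithin (b ^ (-1/(2:ℝ))) (Iio (b ^ (-1/(2:ℝ)))))
      (nhds (6 * b * Real.exp 1)) ∧
    Tendsto (deriv (deriv (deriv (ginExplicit b))))
      (nhdsWithin (b ^ (-1/(2:ℝ))) (Iio (b ^ (-1/(2:ℝ)))))
      (nhds (20 * b ^ ((3:ℝ)/2) * Real.exp 1)) ∧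
    (∃ C : ℝ, ∀ᶠ r in nhdsWithin 0 (Ioi (0:ℝ)),
      |deriv (fun s => ((d:ℝ) + κ)/2 * Real.log (1 + s^2)) (ginExplicit b r)
        * deriv (ginExplicit b) r / r| ≤ C) ∧
    (∃ C : ℝ, ∀ᶠ r in nhdsWithin 0 (Ioi (0:ℝ)),
      |deriv (fun s => Real.log (deriv (ginExplicit b) s)) r / r| ≤ C) ∧
    (∃ C : ℝ, ∀ᶠ r in nhdsWithin 0 (Ioi (0:ℝ)),
      |deriv (fun s => Real.log (ginExplicit b s / s)) r / r| ≤ C) ∧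
    (∃ C : ℝ, ∀ᶠ r in nhdsWithin 0 (Ioi (0:ℝ)),
      |deriv (deriv (fun s => Real.log (ginExplicit b s / s))) r| ≤ C) ∧
    (∃ C : ℝ, ∀ᶠ r in nhdsWithin 0 (Ioi (0:ℝ)),
      |deriv (deriv (fun s => Real.log (deriv (ginExplicit b) s))) r| ≤ C) :=
  ginExplicit_satisfies_G1_general d b κ hb
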